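/- For every positive integer n, the natural map from the dihedral quandle R_{2n} to its enveloping group G_{R_{2n}} is injective. -/

import Mathlib

/-!
The dihedral quandle `R_m` embeds into the conjugation quandle of the dihedral group `D_m`
as its reflections, `i ↦ s rⁱ`. By the universal property of the enveloping group this
embedding factors through `R_m → G_{R_m}`, which is therefore injective.
-/

open Quandles

theorem Rack.toEnvelGroup_injective_of_injective {R : Type*} [Rack R] {G : Type*} [Group G]
    (f : R →◃ Quandle.Conj G) (hf : Function.Injective f) :
    Function.Injective (toEnvelGroup R) := by
  have factor : ⇑f = toEnvelGroup.map f ∘ toEnvelGroup R :=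
    congrArg DFunLike.coe (toEnvelGroup.univ R G f).symm
  exact (factor ▸ hf).of_comp

def Quandle.dihedralToConj (m : ℕ) : Dihedral m →◃ Conj (DihedralGroup m) where
  toFun := DihedralGroup.sr
  map_act' := by
    intro (a : ZMod m) (b : ZMod m)
    change DihedralGroup.sr (dihedralAct m a b) =
      DihedralGroup.sr a * DihedralGroup.sr b * (DihedralGroup.sr a)⁻¹
    rw [DihedralGroup.inv_sr, DihedralGroup.sr_mul_sr, DihedralGroup.r_mul_sr, dihedralAct]
    ring_nf

theorem Quandle.dihedralToConj_injective (m : ℕ) : Function.Injective (dihedralToConj m) :=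
  fun _ _ h => DihedralGroup.sr.inj h

theorem dihedral_toEnvelGroup_injective (n : ℕ) :
    Function.Injective
      (Rack.toEnvelGroup (Quandle.Dihedral (2 * n)) :
        Quandle.Dihedral (2 * n) → Quandle.Conj (Rack.EnvelGroup (Quandle.Dihedral (2 * n)))) :=
  Rack.toEnvelGroup_injective_of_injective _ (Quandle.dihedralToConj_injective (2 * n))
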